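/- Let X be a real Banach space, n a positive integer, π a permutation of {1,…,n}, and f_1,…,f_n : 𝒞_n → X. Then Σ_{i=1}^n 𝔈_i^π ∂_{π(i)} f_{π(i)} = Σ_{A ⊆ {1,…,n}, A ≠ ∅} f̂_{π(max π^{−1}(A))}(A) w_A, where π^{−1}(A) = {π^{−1}(j) : j ∈ A} and f̂_k(A) denotes the Walsh coefficient of f_k. -/
import Mathlib


noncomputable section

open Finset

/-- The sign `±1` attached to a boolean coordinate of the discrete cube. -/
def sgn (b : Bool) : ℝ := if b then 1 else -1

variable {X : Type*} [NormedAddCommGroup X] [NormedSpace ℝ X]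

/-- `L_p` norm of `f : 𝒞_n → X` with respect to the uniform probability measure. -/
def cubeLpNorm (n : ℕ) (p : ℝ) (f : (Fin n → Bool) → X) : ℝ :=
  (((2 : ℝ) ^ n)⁻¹ * ∑ ε : Fin n → Bool, ‖f ε‖ ^ p) ^ (1 / p)

/-- Conditional expectation given the coordinates in `S`: average of `f η` over all
`η` agreeing with `ε` on `S`. -/
def cubeCondExp (n : ℕ) (S : Finset (Fin n)) (f : (Fin n → Bool) → X) :
    (Fin n → Bool) → X := fun ε =>
  ((2 : ℝ) ^ (n - S.card))⁻¹ •
    ∑ η ∈ univ.filter (fun η : Fin n → Bool => ∀ j ∈ S, η j = ε j), f η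

/-- The set of the first `i` coordinates (`0`-based). -/
def firstIdx (n i : ℕ) : Finset (Fin n) := univ.filter fun j => (j : ℕ) < i

/-- `𝔈_i`: conditioning on the first `i` coordinates. -/
def Ei (n i : ℕ) (f : (Fin n → Bool) → X) : (Fin n → Bool) → X :=
  cubeCondExp n (firstIdx n i) f

/-- `𝔈_i^π`: conditioning on the coordinates `π(1),…,π(i)`. -/
def Epi (n : ℕ) (π : Equiv.Perm (Fin n)) (i : ℕ) (f : (Fin n → Bool) → X) :
    (Fin n → Bool) → X :=
  cubeCondExp n ((firstIdx n i).image π) f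

/-- `∂_i`: the `i`-th discrete partial derivative. -/
def cubeDeriv (n : ℕ) (i : Fin n) (f : (Fin n → Bool) → X) : (Fin n → Bool) → X :=
  fun ε => (2 : ℝ)⁻¹ • (f ε - f (Function.update ε i (!(ε i))))

/-- `X` satisfies the hypercube Stein inequality with constant `s` for exponent `p`. -/
def SteinIneq (X : Type*) [NormedAddCommGroup X] [NormedSpace ℝ X] (p s : ℝ) : Prop :=
  ∀ m : ℕ, 0 < m → ∀ (π : Equiv.Perm (Fin m)) (g : Fin m → (Fin m → Bool) → X),
    (((2 : ℝ) ^ m)⁻¹ * ∑ δ : Fin m → Bool,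
        (cubeLpNorm m p fun ε => ∑ i : Fin m, sgn (δ i) • Epi m π ((i : ℕ) + 1) (g i) ε) ^ p) ^ (1 / p)
      ≤ s * (((2 : ℝ) ^ m)⁻¹ * ∑ δ : Fin m → Bool,
        (cubeLpNorm m p fun ε => ∑ i : Fin m, sgn (δ i) • g i ε) ^ p) ^ (1 / p)

/-- `X` satisfies the hypercube UMD⁻ inequality with constant `b` for exponent `p`. -/
def UMDminusIneq (X : Type*) [NormedAddCommGroup X] [NormedSpace ℝ X] (p b : ℝ) : Prop :=
  ∀ m : ℕ, 0 < m → ∀ (π : Equiv.Perm (Fin m)) (d : Fin m → (Fin m → Bool) → X),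
    (∀ i : Fin m, Epi m π ((i : ℕ) + 1) (d i) = d i ∧ Epi m π (i : ℕ) (d i) = 0) →
    cubeLpNorm m p (fun ε => ∑ i : Fin m, d i ε)
      ≤ b * (((2 : ℝ) ^ m)⁻¹ * ∑ δ : Fin m → Bool,
        (cubeLpNorm m p fun ε => ∑ i : Fin m, sgn (δ i) • d i ε) ^ p) ^ (1 / p)

/-- The Walsh function `w_A`. -/
def walsh (n : ℕ) (A : Finset (Fin n)) (ε : Fin n → Bool) : ℝ := ∏ i ∈ A, sgn (ε i)

/-- The Walsh coefficient `f̂(A)`. -/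
def walshCoeff (n : ℕ) (f : (Fin n → Bool) → X) (A : Finset (Fin n)) : X :=
  ((2 : ℝ) ^ n)⁻¹ • ∑ ε : Fin n → Bool, walsh n A ε • f ε

/-- `Δ⁻¹∂_i f = Σ_{A ∋ i} |A|⁻¹ f̂(A) w_A`. -/
def invLapDeriv (n : ℕ) (i : Fin n) (f : (Fin n → Bool) → X) : (Fin n → Bool) → X :=
  fun ε => ∑ A ∈ univ.filter (fun A : Finset (Fin n) => i ∈ A),
    ((A.card : ℝ)⁻¹ * walsh n A ε) • walshCoeff n f A

lemma sgn_not (b : Bool) : sgn (!b) = - sgn b := by cases b <;> simp [sgn]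

lemma walsh_update_of_mem {n : ℕ} {A : Finset (Fin n)} {i : Fin n} (h : i ∈ A)
    (ε : Fin n → Bool) : walsh n A (Function.update ε i (!(ε i))) = - walsh n A ε := by
  unfold walsh
  rw [← Finset.prod_erase_mul _ _ h, ← Finset.prod_erase_mul _ _ h]
  have h1 : ∀ j ∈ A.erase i, sgn (Function.update ε i (!(ε i)) j) = sgn (ε j) := by
    intro j hj; rw [Function.update_of_ne (Finset.ne_of_mem_erase hj)]
  rw [Finset.prod_congr rfl h1, Function.update_self, sgn_not]
  ring

lemma walsh_update_of_not_mem {n : ℕ} {A : Finset (Fin n)} {i : Fin n} (h : i ∉ A)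
    (ε : Fin n → Bool) : walsh n A (Function.update ε i (!(ε i))) = walsh n A ε := by
  unfold walsh
  refine Finset.prod_congr rfl fun j hj => ?_
  have hji : j ≠ i := fun hji => h (by rwa [hji] at hj)
  rw [Function.update_of_ne hji]

lemma cubeDeriv_atom (n : ℕ) (i : Fin n) (A : Finset (Fin n)) (v : X) :
    cubeDeriv n i (fun ε => walsh n A ε • v)
      = if i ∈ A then (fun ε => walsh n A ε • v) else 0 := by
  by_cases h : i ∈ A
  · rw [if_pos h]
    funext ε
    simp only [cubeDeriv, walsh_update_of_mem h, neg_smul, sub_neg_eq_add]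
    rw [← two_smul ℝ, smul_smul]
    norm_num
  · rw [if_neg h]
    funext ε
    simp [cubeDeriv, walsh_update_of_not_mem h]

def agreeEquiv (n : ℕ) (S : Finset (Fin n)) (ε : Fin n → Bool) :
    {η : Fin n → Bool // ∀ j ∈ S, η j = ε j} ≃ ({j : Fin n // j ∉ S} → Bool) where
  toFun η j := η.1 j.1
  invFun γ := ⟨fun j => if h : j ∈ S then ε j else γ ⟨j, h⟩, fun j hj => dif_pos hj⟩
  left_inv η := by
    ext j
    by_cases h : j ∈ S
    · simp [h, η.2 j h]
    · simp [h]
  right_inv γ := by ext j; simp [j.2]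

lemma card_agree (n : ℕ) (S : Finset (Fin n)) (ε : Fin n → Bool) :
    (univ.filter fun η : Fin n → Bool => ∀ j ∈ S, η j = ε j).card = 2 ^ (n - S.card) := by
  classical
  have h1 : (univ.filter fun η : Fin n → Bool => ∀ j ∈ S, η j = ε j).card
      = Fintype.card {η : Fin n → Bool // ∀ j ∈ S, η j = ε j} := by
    rw [Fintype.card_subtype]
  rw [h1, Fintype.card_congr (agreeEquiv n S ε), Fintype.card_fun]
  have : Fintype.card {j : Fin n // j ∉ S} = n - S.card := by
    rw [Fintype.card_subtype]
    have : (univ.filter fun j : Fin n => j ∉ S) = Sᶜ := by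
      ext j; simp
    rw [this, Finset.card_compl, Fintype.card_fin]
  rw [this, Fintype.card_bool]

lemma cubeCondExp_atom (n : ℕ) (S A : Finset (Fin n)) (v : X) :
    cubeCondExp n S (fun ε => walsh n A ε • v)
      = if A ⊆ S then (fun ε => walsh n A ε • v) else 0 := by
  classical
  by_cases h : A ⊆ S
  · rw [if_pos h]
    funext ε
    unfold cubeCondExp
    have hc : ∀ η ∈ univ.filter (fun η : Fin n → Bool => ∀ j ∈ S, η j = ε j),
        walsh n A η • v = walsh n A ε • v := by
      intro η hη
      have hη' := (Finset.mem_filter.mp hη).2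
      congr 1
      exact Finset.prod_congr rfl fun j hj => by rw [hη' j (h hj)]
    rw [Finset.sum_congr rfl hc, Finset.sum_const, card_agree,
      ← Nat.cast_smul_eq_nsmul ℝ, smul_smul]
    push_cast
    rw [inv_mul_cancel₀ (by positivity), one_smul]
  · rw [if_neg h]
    obtain ⟨i, hiA, hiS⟩ : ∃ i, i ∈ A ∧ i ∉ S := by
      rcases Finset.not_subset.mp h with ⟨i, h1, h2⟩
      exact ⟨i, h1, h2⟩
    funext ε
    unfold cubeCondExp
    have : ∑ η ∈ univ.filter (fun η : Fin n → Bool => ∀ j ∈ S, η j = ε j),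
        walsh n A η • v = 0 := by
      apply Finset.sum_involution (fun η _ => Function.update η i (!(η i)))
      · intro η _
        rw [walsh_update_of_mem hiA, neg_smul, add_neg_cancel]
      · intro η _ _ hc
        have := congrFun hc i
        simp at this
      · intro η _
        rw [Function.update_idem, Function.update_self, Bool.not_not,
          Function.update_eq_self]
      · intro η hη
        simp only [Finset.mem_filter, Finset.mem_univ, true_and] at hη ⊢
        intro j hj
        have hji : j ≠ i := fun hji => hiS (by rwa [hji] at hj)
        rw [Function.update_of_ne hji, hη j hj]
    rw [this, smul_zero]
    rfl

lemma walsh_expansion (n : ℕ) (f : (Fin n → Bool) → X) (ε : Fin n → Bool) :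
    ∑ A : Finset (Fin n), walsh n A ε • walshCoeff n f A = f ε := by
  classical
  unfold walshCoeff
  have step1 : ∀ A : Finset (Fin n),
      walsh n A ε • (((2:ℝ)^n)⁻¹ • ∑ η : Fin n → Bool, walsh n A η • f η)
        = ((2:ℝ)^n)⁻¹ • ∑ η : Fin n → Bool, (walsh n A ε * walsh n A η) • f η := by
    intro A
    rw [smul_comm, Finset.smul_sum]
    congr 1
    refine Finset.sum_congr rfl fun η _ => ?_
    rw [smul_smul]
  rw [Finset.sum_congr rfl fun A _ => step1 A, ← Finset.smul_sum, Finset.sum_comm]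
  have key : ∀ η : Fin n → Bool,
      (∑ A : Finset (Fin n), (walsh n A ε * walsh n A η) • f η)
        = (if η = ε then (2:ℝ)^n else 0) • f η := by
    intro η
    rw [← Finset.sum_smul]
    congr 1
    have h1 : ∑ A : Finset (Fin n), walsh n A ε * walsh n A η
        = ∏ i : Fin n, (sgn (ε i) * sgn (η i) + 1) := by
      rw [Finset.prod_add]
      rw [← Finset.powerset_univ]
      refine (Finset.sum_congr rfl fun A _ => ?_).symm
      rw [Finset.prod_const_one, mul_one]
      simp only [walsh, ← Finset.prod_mul_distrib]
    rw [h1]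
    by_cases h : η = ε
    · subst h
      rw [if_pos rfl]
      have : ∀ i : Fin n, sgn (η i) * sgn (η i) + 1 = 2 := by
        intro i; cases η i <;> simp [sgn] <;> ring
      rw [Finset.prod_congr rfl fun i _ => this i, Finset.prod_const, Finset.card_univ,
        Fintype.card_fin]
    · rw [if_neg h]
      obtain ⟨i, hi⟩ : ∃ i, η i ≠ ε i := by
        by_contra hc
        push_neg at hc
        exact h (funext hc)
      apply Finset.prod_eq_zero (Finset.mem_univ i)
      revert hi
      cases η i <;> cases ε i <;> simp [sgn]
  rw [Finset.sum_congr rfl fun η _ => key η]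
  simp only [ite_smul, zero_smul]
  rw [Finset.sum_ite_eq' Finset.univ ε, if_pos (Finset.mem_univ ε),
    smul_smul, inv_mul_cancel₀ (by positivity), one_smul]

lemma cubeCondExp_sum {ι : Type*} (n : ℕ) (S : Finset (Fin n)) (s : Finset ι)
    (g : ι → (Fin n → Bool) → X) :
    cubeCondExp n S (fun ε => ∑ a ∈ s, g a ε)
      = fun ε => ∑ a ∈ s, cubeCondExp n S (g a) ε := by
  funext ε
  unfold cubeCondExp
  rw [Finset.sum_comm, Finset.smul_sum]

lemma cubeDeriv_sum {ι : Type*} (n : ℕ) (i : Fin n) (s : Finset ι)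
    (g : ι → (Fin n → Bool) → X) :
    cubeDeriv n i (fun ε => ∑ a ∈ s, g a ε)
      = fun ε => ∑ a ∈ s, cubeDeriv n i (g a) ε := by
  funext ε
  unfold cubeDeriv
  rw [← Finset.sum_sub_distrib, Finset.smul_sum]

lemma crit {n : ℕ} (π : Equiv.Perm (Fin n)) {A : Finset (Fin n)}
    (h : (A.image ⇑π.symm).Nonempty) (i : Fin n) :
    (π i ∈ A ∧ A ⊆ (firstIdx n ((i : ℕ) + 1)).image ⇑π)
      ↔ i = (A.image ⇑π.symm).max' h := by
  constructor
  · rintro ⟨h1, h2⟩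
    have hle : i ≤ (A.image ⇑π.symm).max' h := by
      apply Finset.le_max'
      exact Finset.mem_image.mpr ⟨π i, h1, π.symm_apply_apply i⟩
    have hge : (A.image ⇑π.symm).max' h ≤ i := by
      obtain ⟨a, ha, hma⟩ := Finset.mem_image.mp ((A.image ⇑π.symm).max'_mem h)
      obtain ⟨j, hj, hja⟩ := Finset.mem_image.mp (h2 ha)
      have hj' : (j : ℕ) < (i : ℕ) + 1 := (Finset.mem_filter.mp hj).2
      have : π.symm a = j := by rw [← hja, π.symm_apply_apply]
      rw [← hma, this]
      exact Fin.le_def.mpr (Nat.lt_succ_iff.mp hj')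
    exact le_antisymm hle hge
  · rintro rfl
    constructor
    · obtain ⟨a, ha, hma⟩ := Finset.mem_image.mp ((A.image ⇑π.symm).max'_mem h)
      have : π ((A.image ⇑π.symm).max' h) = a := by rw [← hma, π.apply_symm_apply]
      rw [this]; exact ha
    · intro a ha
      have h1 : π.symm a ≤ (A.image ⇑π.symm).max' h :=
        Finset.le_max' _ _ (Finset.mem_image.mpr ⟨a, ha, rfl⟩)
      refine Finset.mem_image.mpr ⟨π.symm a, ?_, π.apply_symm_apply a⟩
      refine Finset.mem_filter.mpr ⟨Finset.mem_univ _, ?_⟩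
      exact Nat.lt_succ_iff.mpr (Fin.le_def.mp h1)

/-- `Σᵢ 𝔈ᵢ^π ∂_{π(i)} f_{π(i)} = Σ_{∅ ≠ A ⊆ {1,…,n}} f̂_{π(max π⁻¹(A))}(A) w_A`. -/
theorem sum_Epi_deriv_walsh
    (X : Type*) [NormedAddCommGroup X] [NormedSpace ℝ X] [CompleteSpace X]
    (n : ℕ) (hn : 0 < n) (π : Equiv.Perm (Fin n)) (f : Fin n → (Fin n → Bool) → X) :
    (fun ε => ∑ i : Fin n, Epi n π ((i : ℕ) + 1) (cubeDeriv n (π i) (f (π i))) ε)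
      = fun ε =>
        ∑ A ∈ (univ.filter fun A : Finset (Fin n) => A.Nonempty).attach,
          walsh n (A : Finset (Fin n)) ε •
            walshCoeff n
              (f (π (((A : Finset (Fin n)).image ⇑π.symm).max'
                (((Finset.mem_filter.mp A.2).2).image ⇑π.symm))))
              (A : Finset (Fin n)) := by
  classical
  funext ε
  set G : Finset (Fin n) → X := fun A =>
    if h : A.Nonempty then
      walsh n A ε • walshCoeff n (f (π ((A.image ⇑π.symm).max' (h.image ⇑π.symm)))) A
    else 0 with hG
  have key : ∀ i : Fin n,
      Epi n π ((i : ℕ) + 1) (cubeDeriv n (π i) (f (π i))) ε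
        = ∑ A : Finset (Fin n),
            if π i ∈ A ∧ A ⊆ (firstIdx n ((i : ℕ) + 1)).image ⇑π
            then walsh n A ε • walshCoeff n (f (π i)) A else 0 := by
    intro i
    have hf : f (π i)
        = fun η => ∑ A : Finset (Fin n), walsh n A η • walshCoeff n (f (π i)) A :=
      funext fun η => (walsh_expansion n (f (π i)) η).symm
    unfold Epi
    conv_lhs => rw [hf, cubeDeriv_sum, cubeCondExp_sum]
    refine Finset.sum_congr rfl fun A _ => ?_
    rw [cubeDeriv_atom]
    by_cases h1 : π i ∈ A
    · rw [if_pos h1, cubeCondExp_atom]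
      by_cases h2 : A ⊆ (firstIdx n ((i : ℕ) + 1)).image ⇑π
      · rw [if_pos h2, if_pos ⟨h1, h2⟩]
      · rw [if_neg h2, if_neg (fun hc => h2 hc.2)]
        rfl
    · rw [if_neg h1, if_neg (fun hc => h1 hc.1)]
      show cubeCondExp n _ (0 : (Fin n → Bool) → X) ε = 0
      unfold cubeCondExp
      simp
  calc ∑ i : Fin n, Epi n π ((i : ℕ) + 1) (cubeDeriv n (π i) (f (π i))) ε
      = ∑ i : Fin n, ∑ A : Finset (Fin n),
          (if π i ∈ A ∧ A ⊆ (firstIdx n ((i : ℕ) + 1)).image ⇑π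
            then walsh n A ε • walshCoeff n (f (π i)) A else 0) :=
        Finset.sum_congr rfl fun i _ => key i
    _ = ∑ A : Finset (Fin n), ∑ i : Fin n,
          (if π i ∈ A ∧ A ⊆ (firstIdx n ((i : ℕ) + 1)).image ⇑π
            then walsh n A ε • walshCoeff n (f (π i)) A else 0) := Finset.sum_comm
    _ = ∑ A : Finset (Fin n), G A := by
        refine Finset.sum_congr rfl fun A _ => ?_
        by_cases hA : A.Nonempty
        · rw [hG]
          simp only [dif_pos hA]
          have him : (A.image ⇑π.symm).Nonempty := hA.image _
          rw [Finset.sum_congr rfl fun i _ => if_congr (crit π him i) rfl rfl,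
            Finset.sum_ite_eq' Finset.univ ((A.image ⇑π.symm).max' him)
              (fun i => walsh n A ε • walshCoeff n (f (π i)) A),
            if_pos (Finset.mem_univ _)]
        · have hA' : A = ∅ := Finset.not_nonempty_iff_eq_empty.mp hA
          subst hA'
          rw [hG]
          simp
    _ = ∑ A ∈ univ.filter (fun A : Finset (Fin n) => A.Nonempty), G A := by
        refine (Finset.sum_subset (Finset.subset_univ _) fun A _ hA => ?_).symm
        rw [hG]
        simp only [Finset.mem_filter, Finset.mem_univ, true_and] at hA
        exact dif_neg hA
    _ = ∑ A ∈ (univ.filter fun A : Finset (Fin n) => A.Nonempty).attach, G A.1 :=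
        (Finset.sum_attach _ _).symm
    _ = _ := by
        refine Finset.sum_congr rfl fun A _ => ?_
        rw [hG]
        exact dif_pos ((Finset.mem_filter.mp A.2).2)
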